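/- Let π, ρ ∈ L_CPL each be a conjunction of propositional variables or a disjunction of propositional variables with π ⊨_CPL ρ and ρ ⊭_CPL π, let c, d ∈ [0,1]∩ℚ and ◇, ◇' ∈ {≤,<,>,≥}, and suppose both Pr(π)◇c̄ and Pr(ρ)◇'d̄ are FP-satisfiable and not FP-valid. Then Pr(π)◇c̄ ⊨_FP Pr(ρ)◇'d̄ if and only if ◇, ◇' ∈ {≥,>} and V_Pr(Pr(π)◇c̄) ⊆ V_Pr(Pr(ρ)◇'d̄). -/

import Mathlib

open scoped Classical

/-- Classical propositional formulas (the language `L_CPL`), built from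
propositional variables (indexed by `ℕ`) using ¬, ∧, ∨. -/
inductive CPL where
  | var : ℕ → CPL
  | neg : CPL → CPL
  | and : CPL → CPL → CPL
  | or : CPL → CPL → CPL
deriving DecidableEq

namespace CPL

/-- The set of propositional variables occurring in a formula. -/
def vars : CPL → Finset ℕ
  | var p => {p}
  | neg φ => vars φ
  | and φ χ => vars φ ∪ vars χ
  | or φ χ => vars φ ∪ vars χ

/-- Classical evaluation of a formula under a Boolean valuation. -/
def eval (v : ℕ → Bool) : CPL → Bool
  | var p => v p
  | neg φ => !eval v φ
  | and φ χ => eval v φ && eval v χ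
  | or φ χ => eval v φ || eval v χ

/-- Evaluation of a formula at a state given as a set of variables:
the variables in `X` are true, all others false. -/
def evalSet (X : Finset ℕ) (φ : CPL) : Bool := eval (fun p => decide (p ∈ X)) φ

/-- CPL-satisfiability. -/
def Satisfiable (φ : CPL) : Prop := ∃ v, eval v φ = true

/-- CPL-validity. -/
def Valid (φ : CPL) : Prop := ∀ v, eval v φ = true

/-- Classical entailment `φ ⊨_CPL χ`. -/
def Entails (φ χ : CPL) : Prop := ∀ v, eval v φ = true → eval v χ = true

/-- A literal: a variable or a negated variable. -/
def IsLiteral (φ : CPL) : Prop := (∃ p, φ = var p) ∨ ∃ p, φ = neg (var p)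

/-- An `L_CPL`-term: a conjunction of literals. -/
inductive IsTerm : CPL → Prop
  | lit {φ} : IsLiteral φ → IsTerm φ
  | conj {φ χ} : IsTerm φ → IsTerm χ → IsTerm (and φ χ)

/-- A conjunction of propositional variables. -/
inductive IsConjVars : CPL → Prop
  | var (p : ℕ) : IsConjVars (var p)
  | conj {φ χ} : IsConjVars φ → IsConjVars χ → IsConjVars (and φ χ)

/-- A disjunction of propositional variables. -/
inductive IsDisjVars : CPL → Prop
  | var (p : ℕ) : IsDisjVars (var p)
  | disj {φ χ} : IsDisjVars φ → IsDisjVars χ → IsDisjVars (or φ χ)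

/-- Variables occurring as positive literals (in a term). -/
def posVars : CPL → Finset ℕ
  | var p => {p}
  | neg _ => ∅
  | and φ χ => posVars φ ∪ posVars χ
  | or _ _ => ∅

/-- Variables occurring as negated literals (in a term). -/
def negVars : CPL → Finset ℕ
  | var _ => ∅
  | neg (var p) => {p}
  | neg _ => ∅
  | and φ χ => negVars φ ∪ negVars χ
  | or _ _ => ∅

/-- The literals occurring in a term. -/
def lits (φ : CPL) : Finset CPL :=
  (posVars φ).image var ∪ (negVars φ).image (fun p => neg (var p))

end CPL

/-- A state (possible world) over a finite set `V` of variables: a subset of `V`. -/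
abbrev World (V : Finset ℕ) := {X : Finset ℕ // X ⊆ V}

/-- A probabilistic model for `V`: a finitely additive probability measure
`μ : 2^(2^V) → [0,1]`. -/
structure ProbModel (V : Finset ℕ) where
  μ : Set (World V) → ℝ
  nonneg : ∀ A, 0 ≤ μ A
  le_one : ∀ A, μ A ≤ 1
  m_univ : μ Set.univ = 1
  m_empty : μ ∅ = 0
  m_add : ∀ A B : Set (World V), Disjoint A B → μ (A ∪ B) = μ A + μ B

/-- The truth set `‖φ‖_M` of a classical formula in a probabilistic model for `V`. -/
def truthSet (V : Finset ℕ) (φ : CPL) : Set (World V) :=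
  {w | CPL.evalSet w.1 φ = true}

/-- Comparison symbols ◇ ∈ {≤, <, >, ≥}. -/
inductive Ineq where
  | le | lt | gt | ge
deriving DecidableEq

/-- The relation denoted by a comparison symbol. -/
def Ineq.holds : Ineq → ℝ → ℝ → Prop
  | le, x, c => x ≤ c
  | lt, x, c => x < c
  | gt, x, c => x > c
  | ge, x, c => x ≥ c

/-- Formulas of the probabilistic language `L^Q_Pr`, built from probabilistic atoms
`Pr(φ)` and `Pr(φ)◇c̄` using ¬, △, ⊙, ⊕, →. -/
inductive FP where
  | prob : CPL → FP
  | probIneq : CPL → Ineq → ℚ → FP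
  | neg : FP → FP
  | delta : FP → FP
  | conj : FP → FP → FP
  | disj : FP → FP → FP
  | impl : FP → FP → FP
deriving DecidableEq

namespace FP

/-- Well-formedness: all rational constants lie in `[0,1] ∩ ℚ`. -/
def WF : FP → Prop
  | prob _ => True
  | probIneq _ _ c => 0 ≤ c ∧ c ≤ 1
  | neg α => WF α
  | delta α => WF α
  | conj α β => WF α ∧ WF β
  | disj α β => WF α ∧ WF β
  | impl α β => WF α ∧ WF β

/-- The variables of an `L^Q_Pr`-formula. -/
def vars : FP → Finset ℕ
  | prob φ => φ.vars
  | probIneq φ _ _ => φ.vars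
  | neg α => vars α
  | delta α => vars α
  | conj α β => vars α ∪ vars β
  | disj α β => vars α ∪ vars β
  | impl α β => vars α ∪ vars β

/-- The events `E(α)`: the classical formulas occurring in probabilistic atoms of `α`. -/
def events : FP → Finset CPL
  | prob φ => {φ}
  | probIneq φ _ _ => {φ}
  | neg α => events α
  | delta α => events α
  | conj α β => events α ∪ events β
  | disj α β => events α ∪ events β
  | impl α β => events α ∪ events β

/-- The FP-interpretation `I_M` induced by a probabilistic model `M`. -/
noncomputable def interp {V : Finset ℕ} (M : ProbModel V) : FP → ℝ
  | prob φ => M.μ (truthSet V φ)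
  | probIneq φ d c => if d.holds (M.μ (truthSet V φ)) (c : ℝ) then 1 else 0
  | neg α => 1 - interp M α
  | delta α => if interp M α = 1 then 1 else 0
  | conj α β => max 0 (interp M α + interp M β - 1)
  | disj α β => min 1 (interp M α + interp M β)
  | impl α β => min 1 (1 - interp M α + interp M β)

/-- `α` is FP-satisfiable: `I_M(α) = 1` in some probabilistic model for `Var(α)`. -/
def Satisfiable (α : FP) : Prop := ∃ M : ProbModel α.vars, interp M α = 1

/-- `α` is FP-valid: `I_M(α) = 1` in every probabilistic model for `Var(α)`. -/
def Valid (α : FP) : Prop := ∀ M : ProbModel α.vars, interp M α = 1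

/-- `α ⊨_FP β`: `I_M(β) = 1` in every probabilistic model for the variables of
`{α, β}` with `I_M(α) = 1`. -/
def Entails1 (α β : FP) : Prop :=
  ∀ M : ProbModel (α.vars ∪ β.vars), interp M α = 1 → interp M β = 1

/-- The variables of a finite set of `L^Q_Pr`-formulas. -/
def varsSet (Γ : Finset FP) : Finset ℕ := Γ.sup vars

/-- A finite set `Γ` is FP-satisfiable (`Γ ⊭_FP ⊥`): some probabilistic model for
the variables of `Γ` makes every member of `Γ` equal to `1`. -/
def SetSatisfiable (Γ : Finset FP) : Prop :=
  ∃ M : ProbModel (varsSet Γ), ∀ γ ∈ Γ, interp M γ = 1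

/-- `Γ ⊨_FP δ`: every probabilistic model for the variables of `Γ ∪ {δ}` satisfying
all of `Γ` satisfies `δ`. -/
def EntailsFin (Γ : Finset FP) (δ : FP) : Prop :=
  ∀ M : ProbModel (varsSet Γ ∪ δ.vars), (∀ γ ∈ Γ, interp M γ = 1) → interp M δ = 1

/-- `Γ ⊨^cons_FP δ`: `Γ ⊨_FP δ` and `Γ ⊭_FP ⊥`. -/
def ConsEntails (Γ : Finset FP) (δ : FP) : Prop :=
  EntailsFin Γ δ ∧ SetSatisfiable Γ

/-- The set of permitted values `V_Pr(Pr(φ)◇c̄)`. -/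
def permittedValues (φ : CPL) (d : Ineq) (c : ℚ) : Set ℝ :=
  {x | ∃ (V : Finset ℕ) (M : ProbModel V), φ.vars ⊆ V ∧
      interp M (probIneq φ d c) = 1 ∧ M.μ (truthSet V φ) = x}

end FP

/-- Formulas of the Łukasiewicz language `L^Q_Ł`, built from propositional variables
and truth-constant literals `p◇c̄` using ¬, △, ⊙, ⊕, →. -/
inductive Luk where
  | var : ℕ → Luk
  | ineq : ℕ → Ineq → ℚ → Luk
  | neg : Luk → Luk
  | delta : Luk → Luk
  | conj : Luk → Luk → Luk
  | disj : Luk → Luk → Luk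
  | impl : Luk → Luk → Luk
deriving DecidableEq

/-- An Ł-valuation: a function `Var → [0,1]`. -/
structure LukVal where
  v : ℕ → ℝ
  mem : ∀ p, v p ∈ Set.Icc (0 : ℝ) 1

/-- Extension of an Ł-valuation to all `L^Q_Ł`-formulas. -/
noncomputable def LukVal.eval (val : LukVal) : Luk → ℝ
  | .var p => val.v p
  | .ineq p d c => if d.holds (val.v p) (c : ℝ) then 1 else 0
  | .neg φ => 1 - val.eval φ
  | .delta φ => if val.eval φ = 1 then 1 else 0
  | .conj φ χ => max 0 (val.eval φ + val.eval χ - 1)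
  | .disj φ χ => min 1 (val.eval φ + val.eval χ)
  | .impl φ χ => min 1 (1 - val.eval φ + val.eval χ)

namespace Luk

/-- Well-formedness: all rational constants lie in `[0,1] ∩ ℚ`. -/
def WF : Luk → Prop
  | var _ => True
  | ineq _ _ c => 0 ≤ c ∧ c ≤ 1
  | neg φ => WF φ
  | delta φ => WF φ
  | conj φ χ => WF φ ∧ WF χ
  | disj φ χ => WF φ ∧ WF χ
  | impl φ χ => WF φ ∧ WF χ

/-- `Φ ⊨_Ł χ` for a finite set `Φ`. -/
def EntailsFin (Φ : Finset Luk) (χ : Luk) : Prop :=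
  ∀ val : LukVal, (∀ φ ∈ Φ, val.eval φ = 1) → val.eval χ = 1

/-- `φ` is Ł-valid. -/
def ValidL (φ : Luk) : Prop := ∀ val : LukVal, val.eval φ = 1

/-- A set of `L^Q_Ł`-formulas is Ł-satisfiable. -/
def SatisfiableSet (S : Set Luk) : Prop := ∃ val : LukVal, ∀ φ ∈ S, val.eval φ = 1

/-- The probabilistic counterpart `φ^Pr` of a Łukasiewicz formula. -/
def toFP : Luk → FP
  | var p => .prob (.var p)
  | ineq p d c => .probIneq (.var p) d c
  | neg φ => .neg (toFP φ)
  | delta φ => .delta (toFP φ)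
  | conj φ χ => .conj (toFP φ) (toFP χ)
  | disj φ χ => .disj (toFP φ) (toFP χ)
  | impl φ χ => .impl (toFP φ) (toFP χ)

end Luk

namespace FP

/-- The outer counterpart `α^↑` of an `L^Q_Pr`-formula, replacing each atom `Pr(φ)`
by the fresh variable `e φ` (and `Pr(φ)◇c̄` by `(e φ)◇c̄`). -/
def outer (e : CPL → ℕ) : FP → Luk
  | prob φ => .var (e φ)
  | probIneq φ d c => .ineq (e φ) d c
  | neg α => .neg (outer e α)
  | delta α => .delta (outer e α)
  | conj α β => .conj (outer e α) (outer e β)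
  | disj α β => .disj (outer e α) (outer e β)
  | impl α β => .impl (outer e α) (outer e β)

end FP

/-- The ⊙-conjunction of a (nonempty) list of `L^Q_Pr`-formulas. -/
def bigConjFP : List FP → FP
  | [] => .probIneq (.var 0) .ge 0
  | a :: t => t.foldl .conj a

/-- The ∨-disjunction of a (nonempty) list of classical formulas. -/
def bigDisjCPL : List CPL → CPL
  | [] => .var 0
  | a :: t => t.foldl .or a

/-- The PIT `⊙_i Pr(τ_i)≤c̄_i ⊙ ⊙_i Pr(τ_i)≥c̄_i` associated with the list of
pairs `(τ_i, c_i)`. -/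
def completePITFormula (L : List (CPL × ℚ)) : FP :=
  bigConjFP (L.map (fun t => FP.probIneq t.1 .le t.2) ++
             L.map (fun t => FP.probIneq t.1 .ge t.2))

/-- `τ` is an `L_CPL`-term containing, for every `p ∈ V`, exactly one of the
literals `p` and `¬p` (and no other variables). -/
def IsCompleteTermOver (V : Finset ℕ) (τ : CPL) : Prop :=
  CPL.IsTerm τ ∧ τ.vars ⊆ V ∧ ∀ p ∈ V, (p ∈ τ.posVars ↔ p ∉ τ.negVars)

/-- Membership in `𝒱 = {0, 1/n, …, (n−1)/n, 1}`. -/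
def memVSet (n : ℕ) (c : ℚ) : Prop := ∃ k : ℕ, k ≤ n ∧ c = (k : ℚ) / (n : ℚ)

/-- The data `(τ_i, c_i)` of a `⟨V,𝒱⟩`-complete PIT (with `𝒱` given by `n`). -/
def IsCompletePIT (V : Finset ℕ) (n : ℕ) (L : List (CPL × ℚ)) : Prop :=
  (L.map Prod.fst).Nodup ∧
  (∀ t ∈ L, IsCompleteTermOver V t.1 ∧ memVSet n t.2) ∧
  (L.map Prod.snd).sum = 1

/-- A measure is coherent with a value assignment `pr` on the events `E`. -/
def coherent {V : Finset ℕ} (M : ProbModel V) (E : Finset CPL) (pr : CPL → ℚ) : Prop :=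
  ∀ ψ ∈ E, M.μ (truthSet V ψ) = (pr ψ : ℝ)

/-- Conditional probability `Pr_μ(φ | χ) = μ(‖φ∧χ‖)/μ(‖χ‖)`. -/
noncomputable def condProb {V : Finset ℕ} (M : ProbModel V) (φ χ : CPL) : ℝ :=
  M.μ (truthSet V (CPL.and φ χ)) / M.μ (truthSet V χ)

/-- `τ` is a solution to the PrAP `⟨{φ}, χ, H, E, pr⟩`: an `L_CPL`-term composed of
literals from `H` s.t. `φ, τ ⊨_CPL χ` and some probabilistic model coherent with `pr`
gives `μ(‖φ∧τ‖) > 0`. -/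
def IsPrAPSolution (φ χ : CPL) (H E : Finset CPL) (pr : CPL → ℚ) (τ : CPL) : Prop :=
  CPL.IsTerm τ ∧ τ.lits ⊆ H ∧
  (∀ v, CPL.eval v φ = true → CPL.eval v τ = true → CPL.eval v χ = true) ∧
  ∃ M : ProbModel (φ.vars ∪ χ.vars),
    coherent M E pr ∧ 0 < M.μ (truthSet (φ.vars ∪ χ.vars) (CPL.and φ τ))

/-- `τ` is a preferred solution: a solution s.t. for every other solution `σ` there is
a probabilistic model coherent with `pr` with `μ(‖τ‖) ≥ μ(‖σ‖)`. -/
def IsPreferredPrAPSolution (φ χ : CPL) (H E : Finset CPL) (pr : CPL → ℚ) (τ : CPL) : Prop :=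
  IsPrAPSolution φ χ H E pr τ ∧
  ∀ σ, IsPrAPSolution φ χ H E pr σ → σ ≠ τ →
    ∃ M : ProbModel (φ.vars ∪ χ.vars),
      coherent M E pr ∧
      M.μ (truthSet (φ.vars ∪ χ.vars) σ) ≤ M.μ (truthSet (φ.vars ∪ χ.vars) τ)

/-- The FP-counterpart `Ξ_p = {Pr(ψ)≈c̄ : ψ ∈ E, p(ψ) = c}` of a value assignment,
where `Pr(ψ)≈c̄` abbreviates `(Pr(ψ)≥c̄) ⊙ (Pr(ψ)≤c̄)`. -/
def XiP (E : Finset CPL) (pr : CPL → ℚ) : Finset FP :=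
  E.image (fun ψ => FP.conj (FP.probIneq ψ .ge (pr ψ)) (FP.probIneq ψ .le (pr ψ)))

/-- The next weakest PIL `λ^♭_𝒱` of the PIL `Pr(τ)◇(k/n)`. -/
def flatPIL (n : ℕ) (τ : CPL) (d : Ineq) (k : ℕ) : FP :=
  match d with
  | .ge => FP.probIneq τ .gt (((k : ℚ) - 1) / (n : ℚ))
  | .gt => FP.probIneq τ .ge ((k : ℚ) / (n : ℚ))
  | .le => FP.probIneq τ .lt (((k : ℚ) + 1) / (n : ℚ))
  | .lt => FP.probIneq τ .le ((k : ℚ) / (n : ℚ))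

/-- The theory `Ψ_Γ = Γ^↑ ∪ {p_φ → p_χ : φ, χ ∈ E[Γ], φ ⊨_CPL χ}`. -/
def PsiGamma (Γ : Finset FP) (e : CPL → ℕ) : Set Luk :=
  (fun α => FP.outer e α) '' (↑Γ : Set FP) ∪
  {ψ | ∃ φ ∈ Γ.sup FP.events, ∃ χ ∈ Γ.sup FP.events,
        CPL.Entails φ χ ∧ ψ = Luk.impl (.var (e φ)) (.var (e χ))}

/-- The conjunction `hd ∧ ⋀_{q ∈ s} q`. -/
def conjVarsFrom (hd : CPL) (s : Finset ℕ) : CPL :=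
  (s.sort (· ≤ ·)).foldl (fun acc q => CPL.and acc (CPL.var q)) hd

/-!
Since `π ⊨ ρ` but not conversely, `π` is satisfiable and `ρ` is not valid, there are worlds
satisfying `π`, `ρ ∧ ¬π` and `¬ρ`; weighting them by `x`, `y - x`, `1 - y` gives a model with
`μ‖π‖ = x` and `μ‖ρ‖ = y` for every `0 ≤ x ≤ y ≤ 1`, and every model has `μ‖π‖ ≤ μ‖ρ‖`.
So the entailment says exactly that `Pr(π)◇c̄` at `x` forces `Pr(ρ)◇'d̄` at every `y ≥ x`;
for nontrivial constraints this forces both to be lower bounds.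
-/

namespace CPL

theorem eval_congr (φ : CPL) {v v' : ℕ → Bool} (h : ∀ p ∈ φ.vars, v p = v' p) :
    eval v φ = eval v' φ := by
  induction φ with
  | var p => exact h p (Finset.mem_singleton_self p)
  | neg φ ih => simp only [eval, ih h]
  | and φ χ ih₁ ih₂ | or φ χ ih₁ ih₂ =>
    simp only [eval, ih₁ fun p hp => h p (Finset.mem_union_left _ hp),
      ih₂ fun p hp => h p (Finset.mem_union_right _ hp)]

theorem IsConjVars.eval_const {φ : CPL} (hφ : IsConjVars φ) (b : Bool) :
    eval (fun _ => b) φ = b := by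
  induction hφ with
  | var p => rfl
  | conj _ _ ih₁ ih₂ => simp [eval, ih₁, ih₂]

theorem IsDisjVars.eval_const {φ : CPL} (hφ : IsDisjVars φ) (b : Bool) :
    eval (fun _ => b) φ = b := by
  induction hφ with
  | var p => rfl
  | disj _ _ ih₁ ih₂ => simp [eval, ih₁, ih₂]

theorem eval_const_of_isConjVars_or_isDisjVars {φ : CPL} (hφ : IsConjVars φ ∨ IsDisjVars φ)
    (b : Bool) : eval (fun _ => b) φ = b :=
  hφ.elim (·.eval_const b) (·.eval_const b)

end CPL

def worldOf (V : Finset ℕ) (v : ℕ → Bool) : World V :=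
  ⟨V.filter (fun p => v p), Finset.filter_subset _ _⟩

theorem evalSet_worldOf {V : Finset ℕ} {φ : CPL} (hφ : φ.vars ⊆ V) (v : ℕ → Bool) :
    CPL.evalSet (worldOf V v).1 φ = CPL.eval v φ :=
  CPL.eval_congr φ fun p hp => by simp [worldOf, hφ hp]

theorem mem_truthSet {V : Finset ℕ} {w : World V} {φ : CPL} :
    w ∈ truthSet V φ ↔ CPL.evalSet w.1 φ = true := Iff.rfl

theorem truthSet_subset_of_entails {V : Finset ℕ} {φ χ : CPL} (h : CPL.Entails φ χ) :
    truthSet V φ ⊆ truthSet V χ :=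
  fun _ hw => h _ hw

namespace ProbModel

variable {V : Finset ℕ}

theorem μ_mono (M : ProbModel V) {A B : Set (World V)} (h : A ⊆ B) : M.μ A ≤ M.μ B := by
  have hadd := M.m_add A (B \ A) Set.disjoint_sdiff_right
  rw [Set.union_sdiff_cancel h] at hadd
  linarith [M.nonneg (B \ A)]

noncomputable def ofAtoms {ι : Type*} [Fintype ι] (w : ι → World V) (a : ι → ℝ) (ha : ∀ i, 0 ≤ a i)
    (hsum : ∑ i, a i = 1) : ProbModel V where
  μ A := ∑ i ∈ Finset.univ.filter (fun i => w i ∈ A), a i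
  nonneg _ := Finset.sum_nonneg fun i _ => ha i
  le_one _ := hsum ▸ Finset.sum_le_sum_of_subset_of_nonneg (Finset.filter_subset _ _)
    fun i _ _ => ha i
  m_univ := by simpa using hsum
  m_empty := by simp
  m_add A B hAB := by
    rw [← Finset.sum_union (Finset.disjoint_filter.2 fun i _ hA hB => hAB.ne_of_mem hA hB rfl)]
    congr 1
    ext i
    simp

theorem ofAtoms_μ {ι : Type*} [Fintype ι] (w : ι → World V) (a : ι → ℝ) (ha : ∀ i, 0 ≤ a i)
    (hsum : ∑ i, a i = 1) (A : Set (World V)) :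
    (ofAtoms w a ha hsum).μ A = ∑ i, if w i ∈ A then a i else 0 :=
  Finset.sum_filter _ _

end ProbModel

def JointlyRealizable (V : Finset ℕ) (π ρ : CPL) : Prop :=
  ∀ x y : ℝ, 0 ≤ x → x ≤ y → y ≤ 1 →
    ∃ M : ProbModel V, M.μ (truthSet V π) = x ∧ M.μ (truthSet V ρ) = y

theorem jointlyRealizable_of_entails {V : Finset ℕ} {π ρ : CPL} (hπV : π.vars ⊆ V)
    (hρV : ρ.vars ⊆ V) (hsat : CPL.Satisfiable π) (hnval : ¬ CPL.Valid ρ)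
    (hent : CPL.Entails π ρ) (hnent : ¬ CPL.Entails ρ π) : JointlyRealizable V π ρ := by
  obtain ⟨v₁, hv₁π⟩ := hsat
  obtain ⟨v₂, hv₂ρ, hv₂π⟩ : ∃ v, CPL.eval v ρ = true ∧ CPL.eval v π = false := by
    simpa [CPL.Entails] using hnent
  obtain ⟨v₃, hv₃ρ⟩ : ∃ v, CPL.eval v ρ = false := by simpa [CPL.Valid] using hnval
  have hv₃π : CPL.eval v₃ π = false :=
    Bool.eq_false_iff.2 fun h => by simp [hent v₃ h] at hv₃ρ
  intro x y hx hxy hy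
  have ha : ∀ i, 0 ≤ ![x, y - x, 1 - y] i := by
    simp [Fin.forall_fin_succ, hx, hxy, hy]
  let M := ProbModel.ofAtoms ![worldOf V v₁, worldOf V v₂, worldOf V v₃] ![x, y - x, 1 - y] ha
    (by simp [Fin.sum_univ_three])
  refine ⟨M, ?_, ?_⟩ <;>
    simp [M, ProbModel.ofAtoms_μ, Fin.sum_univ_three, mem_truthSet, evalSet_worldOf, hπV, hρV,
      hv₁π, hent v₁ hv₁π, hv₂π, hv₂ρ, hv₃π, hv₃ρ]

namespace Ineq

theorem ge_or_gt_or_le_or_lt (s : Ineq) : (s = .ge ∨ s = .gt) ∨ (s = .le ∨ s = .lt) := by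
  cases s <;> simp

theorem holds_mono {s : Ineq} (hs : s = .ge ∨ s = .gt) {x y c : ℝ} (h : s.holds x c)
    (hxy : x ≤ y) : s.holds y c := by
  rcases hs with rfl | rfl
  · exact le_trans h hxy
  · exact lt_of_lt_of_le h hxy

theorem holds_anti {s : Ineq} (hs : s = .le ∨ s = .lt) {x y c : ℝ} (h : s.holds y c)
    (hxy : x ≤ y) : s.holds x c := by
  rcases hs with rfl | rfl
  · exact le_trans hxy h
  · exact lt_of_le_of_lt hxy h

theorem forall_holds_le_iff {s s' : Ineq} {c d : ℝ}
    (hsat : ∃ x, 0 ≤ x ∧ x ≤ 1 ∧ s.holds x c) (hnval : ∃ y, 0 ≤ y ∧ y ≤ 1 ∧ ¬ s'.holds y d) :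
    (∀ x y : ℝ, 0 ≤ x → x ≤ y → y ≤ 1 → s.holds x c → s'.holds y d) ↔
      (s = .ge ∨ s = .gt) ∧ (s' = .ge ∨ s' = .gt) ∧
        {x | 0 ≤ x ∧ x ≤ 1 ∧ s.holds x c} ⊆ {x | 0 ≤ x ∧ x ≤ 1 ∧ s'.holds x d} := by
  obtain ⟨x₁, hx₁0, hx₁1, hx₁⟩ := hsat
  obtain ⟨y₀, hy₀0, hy₀1, hy₀⟩ := hnval
  constructor
  · intro H
    have hs : s = .ge ∨ s = .gt := (ge_or_gt_or_le_or_lt s).resolve_right fun hs =>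
      hy₀ (H 0 y₀ le_rfl hy₀0 hy₀1 (holds_anti hs hx₁ hx₁0))
    refine ⟨hs, (ge_or_gt_or_le_or_lt s').resolve_right fun hs' => ?_,
      fun x ⟨hx0, hx1, hx⟩ => ⟨hx0, hx1, H x x hx0 le_rfl hx1 hx⟩⟩
    have hmax := H x₁ (max x₁ y₀) hx₁0 (le_max_left _ _) (max_le hx₁1 hy₀1) hx₁
    exact hy₀ (holds_anti hs' hmax (le_max_right _ _))
  · rintro ⟨-, hs', H⟩ x y hx hxy hy h
    exact holds_mono hs' (H ⟨hx, hxy.trans hy, h⟩).2.2 hxy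

end Ineq

namespace FP

theorem interp_probIneq_eq_one {V : Finset ℕ} (M : ProbModel V) (φ : CPL) (s : Ineq) (c : ℚ) :
    interp M (probIneq φ s c) = 1 ↔ s.holds (M.μ (truthSet V φ)) c := by
  simp only [interp]
  split_ifs with h <;> simp [h]

theorem Satisfiable.exists_holds {φ : CPL} {s : Ineq} {c : ℚ}
    (h : Satisfiable (probIneq φ s c)) : ∃ x, 0 ≤ x ∧ x ≤ 1 ∧ s.holds x c := by
  obtain ⟨M, hM⟩ := h
  exact ⟨_, M.nonneg _, M.le_one _, (interp_probIneq_eq_one M φ s c).1 hM⟩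

theorem exists_not_holds_of_not_valid {φ : CPL} {s : Ineq} {c : ℚ}
    (h : ¬ Valid (probIneq φ s c)) : ∃ x, 0 ≤ x ∧ x ≤ 1 ∧ ¬ s.holds x c := by
  obtain ⟨M, hM⟩ := not_forall.1 h
  exact ⟨_, M.nonneg _, M.le_one _, mt (interp_probIneq_eq_one M φ s c).2 hM⟩

theorem permittedValues_eq {φ : CPL} (s : Ineq) (c : ℚ)
    (h : ∀ x : ℝ, 0 ≤ x → x ≤ 1 →
      ∃ (V : Finset ℕ) (M : ProbModel V), φ.vars ⊆ V ∧ M.μ (truthSet V φ) = x) :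
    permittedValues φ s c = {x | 0 ≤ x ∧ x ≤ 1 ∧ s.holds x c} := by
  ext x
  constructor
  · rintro ⟨V, M, -, hM, rfl⟩
    exact ⟨M.nonneg _, M.le_one _, (interp_probIneq_eq_one M φ s c).1 hM⟩
  · rintro ⟨hx0, hx1, hx⟩
    obtain ⟨V, M, hφV, hMx⟩ := h x hx0 hx1
    exact ⟨V, M, hφV, (interp_probIneq_eq_one M φ s c).2 (hMx ▸ hx), hMx⟩

theorem entails1_probIneq_iff {π ρ : CPL} (hreal : JointlyRealizable (π.vars ∪ ρ.vars) π ρ)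
    (hent : CPL.Entails π ρ) (s s' : Ineq) (c d : ℚ) :
    Entails1 (probIneq π s c) (probIneq ρ s' d) ↔
      ∀ x y : ℝ, 0 ≤ x → x ≤ y → y ≤ 1 → s.holds x c → s'.holds y d := by
  constructor
  · intro hE x y hx hxy hy hxs
    obtain ⟨M, hMπ, hMρ⟩ := hreal x y hx hxy hy
    have := hE M ((interp_probIneq_eq_one M π s c).2 (hMπ ▸ hxs))
    exact hMρ ▸ (interp_probIneq_eq_one M ρ s' d).1 this
  · intro H M hM
    exact (interp_probIneq_eq_one M ρ s' d).2 <| H _ _ (M.nonneg _)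
      (M.μ_mono (truthSet_subset_of_entails hent)) (M.le_one _)
      ((interp_probIneq_eq_one M π s c).1 hM)

end FP

theorem stmt11_general (π ρ : CPL)
    (hπ : CPL.IsConjVars π ∨ CPL.IsDisjVars π)
    (hρ : CPL.IsConjVars ρ ∨ CPL.IsDisjVars ρ)
    (hent : CPL.Entails π ρ) (hnent : ¬ CPL.Entails ρ π)
    (c d : ℚ)
    (s s' : Ineq)
    (h1 : FP.Satisfiable (FP.probIneq π s c))
    (h4 : ¬ FP.Valid (FP.probIneq ρ s' d)) :
    FP.Entails1 (FP.probIneq π s c) (FP.probIneq ρ s' d) ↔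
      ((s = .ge ∨ s = .gt) ∧ (s' = .ge ∨ s' = .gt) ∧
        FP.permittedValues π s c ⊆ FP.permittedValues ρ s' d) := by
  have hreal : JointlyRealizable (π.vars ∪ ρ.vars) π ρ :=
    jointlyRealizable_of_entails Finset.subset_union_left Finset.subset_union_right
      ⟨_, CPL.eval_const_of_isConjVars_or_isDisjVars hπ true⟩
      (fun h => absurd (h fun _ => false) (by simp [CPL.eval_const_of_isConjVars_or_isDisjVars hρ]))
      hent hnent
  have hπvals := FP.permittedValues_eq s c fun x hx0 hx1 =>
    let ⟨M, hMπ, _⟩ := hreal x x hx0 le_rfl hx1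
    ⟨_, M, Finset.subset_union_left, hMπ⟩
  have hρvals := FP.permittedValues_eq s' d fun x hx0 hx1 =>
    let ⟨M, _, hMρ⟩ := hreal x x hx0 le_rfl hx1
    ⟨_, M, Finset.subset_union_right, hMρ⟩
  rw [FP.entails1_probIneq_iff hreal hent, hπvals, hρvals]
  exact Ineq.forall_holds_le_iff h1.exists_holds (FP.exists_not_holds_of_not_valid h4)

/-- For `π, ρ` conjunctions/disjunctions of variables with `π ⊨_CPL ρ`,
`ρ ⊭_CPL π`, and both PILs FP-satisfiable and not FP-valid:
`Pr(π)◇c̄ ⊨_FP Pr(ρ)◇'d̄` iff `◇, ◇' ∈ {≥,>}` and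
`V_Pr(Pr(π)◇c̄) ⊆ V_Pr(Pr(ρ)◇'d̄)`. -/
theorem stmt11 (π ρ : CPL)
    (hπ : CPL.IsConjVars π ∨ CPL.IsDisjVars π)
    (hρ : CPL.IsConjVars ρ ∨ CPL.IsDisjVars ρ)
    (hent : CPL.Entails π ρ) (hnent : ¬ CPL.Entails ρ π)
    (c d : ℚ) (hc0 : 0 ≤ c) (hc1 : c ≤ 1) (hd0 : 0 ≤ d) (hd1 : d ≤ 1)
    (s s' : Ineq)
    (h1 : FP.Satisfiable (FP.probIneq π s c)) (h2 : ¬ FP.Valid (FP.probIneq π s c))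
    (h3 : FP.Satisfiable (FP.probIneq ρ s' d)) (h4 : ¬ FP.Valid (FP.probIneq ρ s' d)) :
    FP.Entails1 (FP.probIneq π s c) (FP.probIneq ρ s' d) ↔
      ((s = .ge ∨ s = .gt) ∧ (s' = .ge ∨ s' = .gt) ∧
        FP.permittedValues π s c ⊆ FP.permittedValues ρ s' d) :=
  stmt11_general π ρ hπ hρ hent hnent c d s s' h1 h4
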